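/- arXiv:math/0211026 — 3 statements merged into one kernel-verified Lean document; each statement's English description precedes it below -/
import Mathlib

section
/- In ℂ[x₁,…,xₙ,v], consider the polynomials F₁ = −x₂ + x₁(x₁+v), F₂ = −x₃ + x₂(x₁+2v), …, F_{n−1} = −xₙ + x_{n−1}(x₁+(n−1)v), Fₙ = xₙ(x₁+nv). Then the quotient ring ℂ[x₁,…,xₙ,v]/(F₁,…,Fₙ) is isomorphic as a ℂ-algebra to ℂ[x₁,v]/(∏_{m=0}^{n} (x₁ + m v)). -/
open MvPolynomial

/-- The defining polynomials `F₁,…,Fₙ` in `ℂ[x₁,…,xₙ,v]`, with variables indexed by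
`Option (Fin n)`: `some j` is `x_{j+1}` and `none` is `v`. -/
noncomputable def petersonF (n : ℕ) (i : Fin n) : MvPolynomial (Option (Fin n)) ℂ :=
  if h : (i : ℕ) + 1 < n then
    -X (some ⟨(i : ℕ) + 1, h⟩) +
      X (some i) * (X (some ⟨0, i.pos⟩) + C (((i : ℕ) + 1 : ℕ) : ℂ) * X none)
  else
    X (some i) * (X (some ⟨0, i.pos⟩) + C ((n : ℕ) : ℂ) * X none)

/-- `ℂ[x₁,…,xₙ,v]/(F₁,…,Fₙ)`. -/
noncomputable abbrev petersonQuot (n : ℕ) : Type :=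
  MvPolynomial (Option (Fin n)) ℂ ⧸ Ideal.span (Set.range (petersonF n))

/-- `∏_{m=0}^{n} (x₁ + m v)` in `ℂ[x₁, v] = ℂ[X 0, X 1]`. -/
noncomputable def prodPoly (n : ℕ) : MvPolynomial (Fin 2) ℂ :=
  ∏ m ∈ Finset.range (n + 1), ((X 0 : MvPolynomial (Fin 2) ℂ) + C ((m : ℕ) : ℂ) * X 1)

/-- `ℂ[x₁,v]/(∏_{m=0}^{n}(x₁+mv))`. -/
noncomputable abbrev prodQuot (n : ℕ) : Type :=
  MvPolynomial (Fin 2) ℂ ⧸ Ideal.span {prodPoly n}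

/-! Modulo `F₁,…,F_{n-1}`, induction on `j` gives `x_{j+1} = ∏_{m ≤ j} (x₁ + m v)`, so that
`Fₙ = xₙ (x₁ + n v)` becomes `∏_{m ≤ n} (x₁ + m v)`. Hence the substitution
`x_{j+1} ↦ ∏_{m ≤ j} (x₁ + m v)` and the inclusion `ℂ[x₁, v] → ℂ[x₁,…,xₙ,v]` descend to mutually
inverse maps of the quotients. -/

namespace Peterson

variable {n : ℕ}

lemma petersonF_castSucc (i : Fin n) :
    petersonF (n + 1) i.castSucc =
      -X (some i.succ) +
        X (some i.castSucc) * (X (some 0) + C (((i : ℕ) + 1 : ℕ) : ℂ) * X none) := by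
  rw [petersonF, dif_pos (by simp)]; rfl

lemma petersonF_last :
    petersonF (n + 1) (Fin.last n) =
      X (some (Fin.last n)) * (X (some 0) + C ((n + 1 : ℕ) : ℂ) * X none) := by
  rw [petersonF, dif_neg (by simp)]; rfl

lemma prodPoly_succ (j : ℕ) :
    prodPoly (j + 1) = prodPoly j * (X 0 + C ((j + 1 : ℕ) : ℂ) * X 1) :=
  Finset.prod_range_succ _ _

lemma prodPoly_zero : prodPoly 0 = X 0 := by simp [prodPoly]

variable (n) in
noncomputable def elim : MvPolynomial (Option (Fin n)) ℂ →ₐ[ℂ] MvPolynomial (Fin 2) ℂ :=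
  aeval fun o => o.elim (X 1) fun j => prodPoly j

@[simp] lemma elim_X_some (j : Fin n) : elim n (X (some j)) = prodPoly j := aeval_X _ _

@[simp] lemma elim_X_none : elim n (X none) = X 1 := aeval_X _ _

variable (n) in
noncomputable def incl : MvPolynomial (Fin 2) ℂ →ₐ[ℂ] MvPolynomial (Option (Fin (n + 1))) ℂ :=
  aeval ![X (some 0), X none]

@[simp] lemma incl_X_zero : incl n (X 0) = X (some 0) := aeval_X _ _

@[simp] lemma incl_X_one : incl n (X 1) = X none := aeval_X _ _

@[simp] lemma incl_C (c : ℂ) : incl n (C c) = C c := aeval_C _ _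

lemma elim_comp_incl : (elim (n + 1)).comp (incl n) = AlgHom.id ℂ _ := by
  ext i
  fin_cases i <;> simp [incl, prodPoly_zero]

lemma elim_petersonF_mem (i : Fin (n + 1)) :
    elim (n + 1) (petersonF (n + 1) i) ∈ Ideal.span {prodPoly (n + 1)} := by
  cases i using Fin.lastCases with
  | last => simp [petersonF_last, prodPoly_succ, prodPoly_zero]
  | cast i => simp [petersonF_castSucc, prodPoly_succ, prodPoly_zero]

lemma mk_petersonF (i : Fin n) :
    (Ideal.Quotient.mk _ (petersonF n i) : petersonQuot n) = 0 :=
  Ideal.Quotient.eq_zero_iff_mem.mpr (Ideal.subset_span ⟨i, rfl⟩)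

lemma mk_X_some_eq_mk_incl_prodPoly (j : Fin (n + 1)) :
    (Ideal.Quotient.mk _ (X (some j)) : petersonQuot (n + 1)) =
      Ideal.Quotient.mk _ (incl n (prodPoly j)) := by
  induction j using Fin.induction with
  | zero => simp [prodPoly_zero]
  | succ i ih =>
    have hF := mk_petersonF i.castSucc
    rw [Fin.val_castSucc] at ih
    rw [petersonF_castSucc] at hF
    rw [Fin.val_succ, prodPoly_succ, map_mul, map_mul, ← ih]
    simp only [map_add, map_neg, map_mul, incl_X_zero, incl_X_one, incl_C] at hF ⊢
    linear_combination -hF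

lemma incl_prodPoly_mem :
    incl n (prodPoly (n + 1)) ∈ Ideal.span (Set.range (petersonF (n + 1))) := by
  rw [← Ideal.Quotient.eq_zero_iff_mem]
  simpa [petersonF_last, prodPoly_succ, mk_X_some_eq_mk_incl_prodPoly] using
    mk_petersonF (Fin.last n)

variable (n) in
noncomputable def equiv : petersonQuot (n + 1) ≃ₐ[ℂ] prodQuot (n + 1) :=
  AlgEquiv.ofAlgHom
    (Ideal.quotientMapₐ _ (elim (n + 1))
      (Ideal.span_le.mpr <| Set.range_subset_iff.mpr elim_petersonF_mem))
    (Ideal.quotientMapₐ _ (incl n)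
      (Ideal.span_le.mpr <| Set.singleton_subset_iff.mpr incl_prodPoly_mem))
    (Ideal.Quotient.algHom_ext _ <| MvPolynomial.algHom_ext fun i => by
      simp [← AlgHom.comp_apply (elim (n + 1)), elim_comp_incl])
    (Ideal.Quotient.algHom_ext _ <| MvPolynomial.algHom_ext fun
      | none => by simp
      | some j => by simpa using (mk_X_some_eq_mk_incl_prodPoly j).symm)

lemma equiv_mk (p : MvPolynomial (Option (Fin (n + 1))) ℂ) :
    equiv n (Ideal.Quotient.mk _ p) = Ideal.Quotient.mk _ (elim (n + 1) p) :=
  rfl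

end Peterson

theorem stmt_7 (n : ℕ) (hn : 0 < n) :
    ∃ e : petersonQuot n ≃ₐ[ℂ] prodQuot n,
      (∀ j : Fin n,
        e (Ideal.Quotient.mk _ (X (some j))) =
          Ideal.Quotient.mk _ (∏ m ∈ Finset.range ((j : ℕ) + 1),
            ((X 0 : MvPolynomial (Fin 2) ℂ) + C ((m : ℕ) : ℂ) * X 1))) ∧
      e (Ideal.Quotient.mk _ (X none)) = Ideal.Quotient.mk _ (X 1) := by
  obtain ⟨n, rfl⟩ := Nat.exists_eq_add_one_of_ne_zero hn.ne'
  refine ⟨Peterson.equiv n, fun j => ?_, ?_⟩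
  · rw [Peterson.equiv_mk, Peterson.elim_X_some]
    rfl
  · rw [Peterson.equiv_mk, Peterson.elim_X_none]
end

section
/- In ℂ[x₁,…,xₙ,v], the n+1 polynomials F₁ = −x₂ + x₁(x₁+v), …, F_{n−1} = −xₙ + x_{n−1}(x₁+(n−1)v), Fₙ = xₙ(x₁+nv), and v form a regular sequence; equivalently, their common zero set is the origin. -/
open MvPolynomial

namespace PetersonAux

/-- `pp n hn k = x₁(x₁+v)(x₁+2v)⋯(x₁+kv)`. -/
noncomputable def pp (n : ℕ) (hn : 0 < n) : ℕ → MvPolynomial (Option (Fin n)) ℂ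
  | 0 => X (some ⟨0, hn⟩)
  | (k+1) => pp n hn k * (X (some ⟨0, hn⟩) + C ((k+1 : ℕ) : ℂ) * X none)

/-- substitution: kill `x₂,…,x_{i+1}` by replacing with `pp`. -/
noncomputable def sig (n : ℕ) (hn : 0 < n) (i : ℕ) : Option (Fin n) → MvPolynomial (Option (Fin n)) ℂ
  | none => X none
  | some j => if (j : ℕ) ≤ i then pp n hn (j : ℕ) else X (some j)

/-- The ideal generated by the first `i` of the `F`'s. -/
noncomputable def Igen (n i : ℕ) : Ideal (MvPolynomial (Option (Fin n)) ℂ) :=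
  Ideal.span {p | ∃ k : Fin n, (k : ℕ) < i ∧ p = petersonF n k}

lemma Igen_mono {n : ℕ} {i j : ℕ} (h : i ≤ j) : Igen n i ≤ Igen n j :=
  Ideal.span_mono (by rintro p ⟨k, hk, rfl⟩; exact ⟨k, lt_of_lt_of_le hk h, rfl⟩)

lemma F_mem_Igen {n i : ℕ} (k : Fin n) (hk : (k : ℕ) < i) : petersonF n k ∈ Igen n i :=
  Ideal.subset_span ⟨k, hk, rfl⟩

/-- If a substitution fixes each variable mod `I`, it fixes everything mod `I`. -/
lemma aeval_sub_mem {σ : Type*} {I : Ideal (MvPolynomial σ ℂ)}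
    {g : σ → MvPolynomial σ ℂ} (hg : ∀ j, g j - X j ∈ I) (f : MvPolynomial σ ℂ) :
    aeval g f - f ∈ I := by
  induction f using MvPolynomial.induction_on with
  | C a => simp
  | add p q hp hq =>
    have : aeval g (p + q) - (p + q) = (aeval g p - p) + (aeval g q - q) := by
      rw [map_add]; ring
    rw [this]; exact I.add_mem hp hq
  | mul_X p j hp =>
    have : aeval g (p * X j) - p * X j
        = (aeval g p) * (g j - X j) + (aeval g p - p) * X j := by
      rw [map_mul, aeval_X]; ring
    rw [this]
    exact I.add_mem (I.mul_mem_left _ (hg j)) (I.mul_mem_right _ hp)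

lemma isSMulRegular_quotient {R : Type*} [CommRing R] {I : Ideal R} {r : R}
    (h : ∀ f, r * f ∈ I → f ∈ I) :
    IsSMulRegular (R ⧸ (I • (⊤ : Submodule R R))) r := by
  have hI : (I • (⊤ : Submodule R R)) = I := by
    rw [Ideal.smul_eq_mul, Ideal.mul_top]
  intro a b hab
  obtain ⟨x, rfl⟩ := Submodule.Quotient.mk_surjective _ a
  obtain ⟨y, rfl⟩ := Submodule.Quotient.mk_surjective _ b
  simp only [← Submodule.Quotient.mk_smul] at hab
  rw [Submodule.Quotient.eq, hI] at hab
  rw [Submodule.Quotient.eq, hI]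
  have : r * (x - y) ∈ I := by
    have : r • x - r • y = r * (x - y) := by simp [smul_eq_mul]; ring
    rwa [this] at hab
  exact h _ this

variable {n : ℕ}

lemma sig_none (hn : 0 < n) (i : ℕ) : sig n hn i none = X none := rfl

lemma sig_some_le (hn : 0 < n) {i : ℕ} {j : Fin n} (h : (j : ℕ) ≤ i) :
    sig n hn i (some j) = pp n hn (j : ℕ) := by simp [sig, h]

lemma sig_some_gt (hn : 0 < n) {i : ℕ} {j : Fin n} (h : i < (j : ℕ)) :
    sig n hn i (some j) = X (some j) := by simp [sig, Nat.not_le.mpr h]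

lemma sig_zero (hn : 0 < n) (i : ℕ) (h0 : 0 < n) :
    sig n hn i (some ⟨0, h0⟩) = X (some ⟨0, h0⟩) := by
  simp [sig, pp]

/-- `π_i` kills `F_k` for `k < i` (when `k+1 < n`). -/
lemma aeval_sig_F_eq_zero (hn : 0 < n) {i : ℕ} {k : Fin n} (hk : (k : ℕ) + 1 ≤ i)
    (hkn : (k : ℕ) + 1 < n) :
    aeval (sig n hn i) (petersonF n k) = 0 := by
  rw [petersonF, dif_pos hkn]
  have h1 : ((⟨(k : ℕ) + 1, hkn⟩ : Fin n) : ℕ) ≤ i := hk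
  have h2 : (k : ℕ) ≤ i := le_trans (Nat.le_succ _) hk
  simp only [map_add, map_neg, map_mul, aeval_X, aeval_C, algebraMap_eq,
    sig_some_le hn h1, sig_some_le hn h2, sig_zero hn i k.pos, sig_none]
  show -pp n hn ((k : ℕ) + 1) + _ = 0
  rw [pp]
  ring

lemma pp_sub_mem (hn : 0 < n) {i : ℕ} : ∀ (k : ℕ) (hk : k < n), k ≤ i →
    pp n hn k - X (some ⟨k, hk⟩) ∈ Igen n i
  | 0, hk, _ => by
      have : pp n hn 0 - X (some ⟨0, hk⟩) = 0 := by rw [pp]; ring_nf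
      rw [this]; exact (Igen n i).zero_mem
  | (k+1), hk, hki => by
      have hkn : k < n := lt_trans (Nat.lt_succ_self k) hk
      have hFk : petersonF n ⟨k, hkn⟩ ∈ Igen n i :=
        F_mem_Igen _ (lt_of_lt_of_le (Nat.lt_succ_self k) hki)
      have hIH : pp n hn k - X (some ⟨k, hkn⟩) ∈ Igen n i :=
        pp_sub_mem hn k hkn (le_trans (Nat.le_succ _) hki)
      have key : pp n hn (k+1) - X (some ⟨k+1, hk⟩)
          = (pp n hn k - X (some ⟨k, hkn⟩)) *
              (X (some ⟨0, hn⟩) + C ((k+1 : ℕ) : ℂ) * X none)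
            + petersonF n ⟨k, hkn⟩ := by
        rw [pp, petersonF, dif_pos (show (k : ℕ) + 1 < n from hk)]
        ring_nf
      rw [key]
      exact (Igen n i).add_mem ((Igen n i).mul_mem_right _ hIH) hFk

lemma sig_sub_mem (hn : 0 < n) (i : ℕ) (hi : i < n) (j : Option (Fin n)) :
    sig n hn i j - X j ∈ Igen n i := by
  cases j with
  | none => simp [sig_none]
  | some j =>
    rcases le_or_gt (j : ℕ) i with h | h
    · rw [sig_some_le hn h]
      have := pp_sub_mem hn (i := i) (j : ℕ) j.isLt h
      simpa using this
    · simp [sig_some_gt hn h]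

lemma aeval_sig_sub_mem (hn : 0 < n) {i : ℕ} (hi : i < n)
    (f : MvPolynomial (Option (Fin n)) ℂ) :
    aeval (sig n hn i) f - f ∈ Igen n i :=
  aeval_sub_mem (fun j => sig_sub_mem hn i hi j) f

/-- evaluation point: all `x`'s are 1, `v = 0`. -/
def uOne (n : ℕ) : Option (Fin n) → ℂ := fun j => Option.elim j 0 (fun _ => 1)

lemma eval_uOne_pp (hn : 0 < n) (k : ℕ) : eval (uOne n) (pp n hn k) = 1 := by
  induction k with
  | zero => simp [pp, uOne]
  | succ k ih => simp [pp, uOne, ih]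

lemma igen_le_ker (hn : 0 < n) (i : ℕ) (hi : i < n) :
    ∀ p ∈ Igen n i, aeval (sig n hn i) p = 0 := by
  have : Igen n i ≤ RingHom.ker (aeval (sig n hn i)).toRingHom := by
    rw [Igen, Ideal.span_le]
    rintro p ⟨k, hk, rfl⟩
    have hkn : (k : ℕ) + 1 < n := by omega
    exact RingHom.mem_ker.mpr (aeval_sig_F_eq_zero hn hk hkn)
  exact fun p hp => RingHom.mem_ker.mp (this hp)

lemma aeval_sig_F_self_ne_zero (hn : 0 < n) (i : Fin n) :
    aeval (sig n hn (i : ℕ)) (petersonF n i) ≠ 0 := by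
  by_cases h : (i : ℕ) + 1 < n
  · -- image is `-x_{i+2} + pp i * (x₁ + (i+1) v)`; evaluate at `x_{i+2} = 1`, rest `0`
    rw [petersonF, dif_pos h]
    have hgt : (i : ℕ) < ((⟨(i : ℕ) + 1, h⟩ : Fin n) : ℕ) := Nat.lt_succ_self _
    simp only [map_add, map_neg, map_mul, aeval_X, aeval_C, algebraMap_eq,
      sig_some_le hn (le_refl (i : ℕ)), sig_zero hn _ i.pos, sig_none,
      sig_some_gt hn hgt]
    intro hcon
    set u : Option (Fin n) → ℂ := fun j =>
      if j = some ⟨(i : ℕ) + 1, h⟩ then (1 : ℂ) else 0 with hu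
    have h0 : (some ⟨0, i.pos⟩ : Option (Fin n)) ≠ some ⟨(i : ℕ) + 1, h⟩ := by
      simp [Fin.ext_iff]
    have hnone : (none : Option (Fin n)) ≠ some ⟨(i : ℕ) + 1, h⟩ := by simp
    have h1 : eval u (-X (some ⟨(i : ℕ) + 1, h⟩) +
        pp n hn (i : ℕ) * (X (some ⟨0, i.pos⟩) + C (((i : ℕ) + 1 : ℕ) : ℂ) * X none))
        = -1 := by
      rw [map_add, map_neg, map_mul, map_add, map_mul, eval_X, eval_X, eval_X, eval_C]
      rw [hu]
      simp [h0, hnone]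
    rw [hcon] at h1
    simp at h1
  · rw [petersonF, dif_neg h]
    simp only [map_mul, map_add, aeval_X, aeval_C, algebraMap_eq,
      sig_some_le hn (le_refl (i : ℕ)), sig_zero hn _ i.pos, sig_none]
    intro hcon
    have h1 : eval (uOne n) (pp n hn (i : ℕ) *
        (X (some ⟨0, i.pos⟩) + C ((n : ℕ) : ℂ) * X none)) = 1 := by
      rw [map_mul, map_add, map_mul, eval_X, eval_X, eval_C, eval_uOne_pp hn]
      simp [uOne]
    rw [hcon] at h1
    simp at h1

/-- Main step for `i < n`: `F_i` is a nonzerodivisor modulo `(F_0, …, F_{i-1})`. -/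
lemma keyA (hn : 0 < n) (i : Fin n) (f : MvPolynomial (Option (Fin n)) ℂ)
    (hf : petersonF n i * f ∈ Igen n (i : ℕ)) : f ∈ Igen n (i : ℕ) := by
  set π : MvPolynomial (Option (Fin n)) ℂ →ₐ[ℂ] MvPolynomial (Option (Fin n)) ℂ :=
    aeval (sig n hn (i : ℕ)) with hπ
  have hkill := igen_le_ker hn (i : ℕ) i.isLt
  have h1 : π (petersonF n i) * π f = 0 := by
    rw [← map_mul]; exact hkill _ hf
  have h2 : π f = 0 :=
    (mul_eq_zero.mp h1).resolve_left (aeval_sig_F_self_ne_zero hn i)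
  have h3 : π f - f ∈ Igen n (i : ℕ) := aeval_sig_sub_mem hn i.isLt f
  rw [h2] at h3
  simpa using (Igen n (i : ℕ)).neg_mem h3

/-- substitution killing `v`. -/
noncomputable def tau (n : ℕ) : Option (Fin n) → MvPolynomial (Option (Fin n)) ℂ :=
  fun j => Option.elim j 0 (fun k => X (some k))

lemma tau_pp (hn : 0 < n) (k : ℕ) :
    aeval (tau n) (pp n hn k)
      = (X (some ⟨0, hn⟩) : MvPolynomial (Option (Fin n)) ℂ) ^ (k+1) := by
  induction k with
  | zero => simp [pp, tau]
  | succ k ih =>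
    rw [pp, map_mul, ih, map_add, map_mul, aeval_X, aeval_X, aeval_C]
    show _ * (X (some ⟨0, hn⟩) + _ * (0 : MvPolynomial (Option (Fin n)) ℂ)) = _
    ring

lemma aeval_sig_F_last (hn : 0 < n) (k : Fin n) (hk : (k : ℕ) = n - 1) :
    aeval (sig n hn (n-1)) (petersonF n k)
      = pp n hn (n-1) * (X (some ⟨0, hn⟩) + C ((n : ℕ) : ℂ) * X none) := by
  have hkn : ¬ ((k : ℕ) + 1 < n) := by omega
  rw [petersonF, dif_neg hkn]
  simp only [map_mul, map_add, aeval_X, aeval_C, algebraMap_eq, sig_none,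
    sig_some_le hn (le_of_eq hk), sig_zero hn _ k.pos]
  rw [hk]

/-- Main step for the last element: `v` is a nonzerodivisor modulo `(F_0, …, F_{n-1})`. -/
lemma keyB (hn : 0 < n) (f : MvPolynomial (Option (Fin n)) ℂ)
    (hf : X none * f ∈ Igen n n) : f ∈ Igen n n := by
  have hn1 : n - 1 < n := Nat.sub_lt hn one_pos
  set π : MvPolynomial (Option (Fin n)) ℂ →ₐ[ℂ] MvPolynomial (Option (Fin n)) ℂ :=
    aeval (sig n hn (n-1)) with hπ
  set τ : MvPolynomial (Option (Fin n)) ℂ →ₐ[ℂ] MvPolynomial (Option (Fin n)) ℂ :=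
    aeval (tau n) with hτ
  set Pn : MvPolynomial (Option (Fin n)) ℂ :=
    pp n hn (n-1) * (X (some ⟨0, hn⟩) + C ((n : ℕ) : ℂ) * X none) with hPn
  have hmap : ∀ p ∈ Igen n n, π p ∈ Ideal.span {Pn} := by
    have hle : Igen n n ≤ Ideal.comap π.toRingHom (Ideal.span {Pn}) := by
      rw [Igen, Ideal.span_le]
      rintro p ⟨k, hk, rfl⟩
      rcases lt_or_eq_of_le (show (k : ℕ) ≤ n - 1 by omega) with h | h
      · have h0 : aeval (sig n hn (n-1)) (petersonF n k) = 0 :=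
          aeval_sig_F_eq_zero hn (by omega) (by omega)
        show π (petersonF n k) ∈ Ideal.span {Pn}
        rw [hπ, h0]
        exact Ideal.zero_mem _
      · show π (petersonF n k) ∈ Ideal.span {Pn}
        rw [hπ, aeval_sig_F_last hn k h]
        exact Ideal.subset_span rfl
    exact fun p hp => hle hp
  have hπv : π (X none) = X none := by rw [hπ, aeval_X]; rfl
  have h1 : X none * π f ∈ Ideal.span {Pn} := by
    have := hmap _ hf
    rwa [map_mul, hπv] at this
  obtain ⟨g, hg⟩ := Ideal.mem_span_singleton'.mp h1
  -- apply τ to `g * Pn = X none * π f`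
  have hτv : τ (X none) = 0 := by rw [hτ, aeval_X]; rfl
  have hτPn : τ Pn = (X (some ⟨0, hn⟩) : MvPolynomial (Option (Fin n)) ℂ) ^ (n+1) := by
    rw [hPn, map_mul, hτ, tau_pp hn, map_add, map_mul, aeval_X, aeval_X]
    show _ * ((X (some ⟨0, hn⟩)) + _ * (0 : MvPolynomial (Option (Fin n)) ℂ)) = _
    rw [mul_zero, add_zero, ← pow_succ]
    congr 1
    omega
  have hτg : τ g = 0 := by
    have h2 := congrArg τ hg
    rw [map_mul, hτPn, map_mul, hτv, zero_mul] at h2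
    rcases mul_eq_zero.mp h2 with h | h
    · exact h
    · exact absurd h (pow_ne_zero _ (X_ne_zero _))
  -- hence `g` is a multiple of `X none`
  have hgv : g ∈ Ideal.span {(X none : MvPolynomial (Option (Fin n)) ℂ)} := by
    have hsub : τ g - g ∈ Ideal.span {(X none : MvPolynomial (Option (Fin n)) ℂ)} := by
      refine aeval_sub_mem (fun j => ?_) g
      cases j with
      | none =>
        show (0 : MvPolynomial (Option (Fin n)) ℂ) - X none ∈ _
        rw [zero_sub]
        exact neg_mem (Ideal.subset_span rfl)
      | some k =>
        show X (some k) - X (some k) ∈ _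
        rw [sub_self]; exact Ideal.zero_mem _
    rw [hτg, zero_sub] at hsub
    simpa using neg_mem hsub
  obtain ⟨g', hg'⟩ := Ideal.mem_span_singleton'.mp hgv
  -- cancel `X none`
  have hcan : π f = g' * Pn := by
    have : X none * (g' * Pn) = X none * π f := by
      rw [← hg, ← hg']; ring
    exact (mul_left_cancel₀ (X_ne_zero none) this).symm
  -- `Pn` belongs to the full ideal
  have hPmem : Pn ∈ Igen n n := by
    have hFm : petersonF n ⟨n-1, hn1⟩ ∈ Igen n n := F_mem_Igen _ hn1
    have hsub : π (petersonF n ⟨n-1, hn1⟩) - petersonF n ⟨n-1, hn1⟩ ∈ Igen n (n-1) :=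
      aeval_sig_sub_mem hn hn1 _
    have hπF : π (petersonF n ⟨n-1, hn1⟩) = Pn := by
      rw [hπ, aeval_sig_F_last hn ⟨n-1, hn1⟩ rfl]
    have : Pn - petersonF n ⟨n-1, hn1⟩ ∈ Igen n n := by
      rw [← hπF]
      exact Igen_mono (le_of_lt hn1) hsub
    have := (Igen n n).add_mem this hFm
    simpa using this
  have h3 : π f - f ∈ Igen n (n-1) := aeval_sig_sub_mem hn hn1 f
  have h4 : π f - f ∈ Igen n n := Igen_mono (le_of_lt hn1) h3
  have h5 : π f ∈ Igen n n := by
    rw [hcan]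
    exact (Igen n n).mul_mem_left _ hPmem
  have := (Igen n n).sub_mem h5 h4
  simpa using this

lemma take_L (hn : 0 < n) (i : ℕ) (hi : i ≤ n) :
    Ideal.ofList ((List.ofFn (petersonF n)
        ++ [(X none : MvPolynomial (Option (Fin n)) ℂ)]).take i) = Igen n i := by
  unfold Igen Ideal.ofList
  congr 1
  ext p
  simp only [Set.mem_setOf_eq]
  constructor
  · intro hp
    rw [List.mem_take_iff_getElem] at hp
    obtain ⟨j, hj, rfl⟩ := hp
    have hji : j < i := lt_of_lt_of_le hj (min_le_left _ _)
    have hjn : j < n := lt_of_lt_of_le hji hi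
    refine ⟨⟨j, hjn⟩, hji, ?_⟩
    rw [List.getElem_append_left (by simpa using hjn), List.getElem_ofFn]
  · rintro ⟨k, hk, rfl⟩
    rw [List.mem_take_iff_getElem]
    refine ⟨(k : ℕ), ?_, ?_⟩
    · simp only [List.length_append, List.length_ofFn, List.length_cons, List.length_nil]
      omega
    · rw [List.getElem_append_left (by simpa using k.isLt), List.getElem_ofFn]

lemma eval_zero_F (i : Fin n) : eval (0 : Option (Fin n) → ℂ) (petersonF n i) = 0 := by
  rw [petersonF]
  split_ifs <;> simp

end PetersonAux

open PetersonAux in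
theorem stmt_8 (n : ℕ) (hn : 0 < n) :
    RingTheory.Sequence.IsRegular (MvPolynomial (Option (Fin n)) ℂ)
      (List.ofFn (petersonF n) ++ [X none]) ∧
    ∀ x : Option (Fin n) → ℂ,
      (∀ i : Fin n, eval x (petersonF n i) = 0) → x none = 0 → x = 0 := by
  classical
  constructor
  · have hlen : (List.ofFn (petersonF n)
        ++ [(X none : MvPolynomial (Option (Fin n)) ℂ)]).length = n + 1 := by
      simp
    refine ⟨⟨fun i hi => ?_⟩, ?_⟩
    · rw [hlen] at hi
      rw [take_L hn i (by omega)]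
      rcases Nat.lt_or_ge i n with h | h
      · have hEl : (List.ofFn (petersonF n)
            ++ [(X none : MvPolynomial (Option (Fin n)) ℂ)])[i]'(by rw [hlen]; omega)
            = petersonF n ⟨i, h⟩ := by
          rw [List.getElem_append_left (by simpa using h), List.getElem_ofFn]
        rw [hEl]
        exact isSMulRegular_quotient (keyA hn ⟨i, h⟩)
      · have hin : i = n := by omega
        have hEl : (List.ofFn (petersonF n)
            ++ [(X none : MvPolynomial (Option (Fin n)) ℂ)])[i]'(by rw [hlen]; omega)
            = X none := by
          rw [List.getElem_append_right (by simpa using h)]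
          simp [hin]
        rw [hEl, hin]
        exact isSMulRegular_quotient (keyB hn)
    · intro htop
      have hsm : Ideal.ofList (List.ofFn (petersonF n)
            ++ [(X none : MvPolynomial (Option (Fin n)) ℂ)])
          • (⊤ : Submodule (MvPolynomial (Option (Fin n)) ℂ)
              (MvPolynomial (Option (Fin n)) ℂ))
          = Ideal.ofList (List.ofFn (petersonF n)
            ++ [(X none : MvPolynomial (Option (Fin n)) ℂ)]) := by
        rw [Ideal.smul_eq_mul, Ideal.mul_top]
      rw [hsm] at htop
      have hone : (1 : MvPolynomial (Option (Fin n)) ℂ) ∈ Ideal.ofList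
          (List.ofFn (petersonF n) ++ [(X none : MvPolynomial (Option (Fin n)) ℂ)]) := by
        rw [← htop]; trivial
      have hker : Ideal.ofList (List.ofFn (petersonF n)
            ++ [(X none : MvPolynomial (Option (Fin n)) ℂ)])
          ≤ RingHom.ker (eval (0 : Option (Fin n) → ℂ)) := by
        rw [Ideal.ofList, Ideal.span_le]
        intro p hp
        simp only [Set.mem_setOf_eq, List.mem_append, List.mem_ofFn,
          List.mem_singleton] at hp
        rcases hp with ⟨k, rfl⟩ | rfl
        · exact RingHom.mem_ker.mpr (eval_zero_F k)
        · exact RingHom.mem_ker.mpr (by simp)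
      have := hker hone
      rw [RingHom.mem_ker] at this
      simp at this
  · intro x hx hv
    have hx0 : ∀ (k : ℕ) (hk : k < n), x (some ⟨k, hk⟩) = x (some ⟨0, hn⟩) ^ (k + 1) := by
      intro k
      induction k with
      | zero => intro hk; rw [pow_one]
      | succ k ih =>
        intro hk
        have hkn : k < n := by omega
        have hF := hx ⟨k, hkn⟩
        rw [petersonF, dif_pos (show k + 1 < n from hk)] at hF
        simp only [map_add, map_neg, map_mul, eval_X, eval_C, hv, mul_zero,
          add_zero] at hF
        have : x (some ⟨k + 1, hk⟩) = x (some ⟨k, hkn⟩) * x (some ⟨0, hn⟩) := by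
          linear_combination -hF
        rw [this, ih hkn]
        ring
    have hlast := hx ⟨n - 1, Nat.sub_lt hn one_pos⟩
    rw [petersonF, dif_neg (by simp; omega)] at hlast
    simp only [map_mul, map_add, eval_X, eval_C, hv, mul_zero, add_zero] at hlast
    have h00 : x (some ⟨0, hn⟩) = 0 := by
      rcases mul_eq_zero.mp hlast with h | h
      · have := hx0 (n - 1) (Nat.sub_lt hn one_pos)
        rw [h] at this
        exact pow_eq_zero_iff (by omega) |>.mp this.symm
      · exact h
    funext j
    cases j with
    | none => simpa using hv
    | some k =>
      have := hx0 (k : ℕ) k.isLt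
      rw [h00, zero_pow (by omega)] at this
      simpa using this
end

section
/- Setting v = 1 in the ℙⁿ relations: the common zeros in ℂⁿ of the system x₂ = x₁(x₁+1), x₃ = x₂(x₁+2), …, xₙ = x_{n−1}(x₁+(n−1)), xₙ(x₁+n) = 0 consist of exactly n+1 distinct points, one for each choice x₁ = −m with m ∈ {0,1,…,n}. -/
theorem stmt_10 (n : ℕ) (hn : 0 < n)
    (sol : Fin (n + 1) → Fin n → ℂ)
    (hsol : ∀ (m : Fin (n + 1)) (j : Fin n),
      sol m j = ∏ k ∈ Finset.range ((j : ℕ) + 1), (-((m : ℕ) : ℂ) + (k : ℂ))) :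
    {x : Fin n → ℂ |
        (∀ (j : Fin n) (h : (j : ℕ) + 1 < n),
          x ⟨(j : ℕ) + 1, h⟩ = x j * (x ⟨0, hn⟩ + (((j : ℕ) + 1 : ℕ) : ℂ))) ∧
        x ⟨n - 1, by omega⟩ * (x ⟨0, hn⟩ + (n : ℂ)) = 0} = Set.range sol ∧
    Function.Injective sol := by
  constructor
  · ext x
    simp only [Set.mem_setOf_eq, Set.mem_range]
    constructor
    · rintro ⟨hrec, hlast⟩
      have key : ∀ i (h : i < n),
          x ⟨i, h⟩ = ∏ k ∈ Finset.range (i + 1), (x ⟨0, hn⟩ + (k : ℂ)) := by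
        intro i
        induction i with
        | zero => intro h; simp
        | succ i ih =>
          intro h
          have hi : i < n := by omega
          have h2 := hrec ⟨i, hi⟩ h
          rw [h2, ih hi]
          conv_rhs => rw [Finset.prod_range_succ]
          try push_cast
          try ring
      have hn1 : n - 1 + 1 = n := by omega
      have hfull : ∏ k ∈ Finset.range (n + 1), (x ⟨0, hn⟩ + (k : ℂ)) = 0 := by
        rw [Finset.prod_range_succ]
        rw [key (n - 1) (by omega), hn1] at hlast
        exact hlast
      obtain ⟨k, hk, hk0⟩ := Finset.prod_eq_zero_iff.mp hfull
      have hx0 : x ⟨0, hn⟩ = -(k : ℂ) := eq_neg_of_add_eq_zero_left hk0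
      refine ⟨⟨k, Finset.mem_range.mp hk⟩, ?_⟩
      funext j
      rw [hsol]
      rw [key j j.isLt]
      refine Finset.prod_congr rfl fun i _ => ?_
      rw [hx0]
      try ring
    · rintro ⟨m, rfl⟩
      constructor
      · intro j h
        rw [hsol, hsol, hsol]
        conv_lhs => rw [Finset.prod_range_succ]
        rw [Finset.prod_range_one]
        try push_cast
        try ring
      · rw [hsol, hsol, Finset.prod_range_one]
        have hn1 : n - 1 + 1 = n := by omega
        rw [hn1]
        have : ∏ k ∈ Finset.range (n + 1), (-((m : ℕ) : ℂ) + (k : ℂ)) = 0 := by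
          apply Finset.prod_eq_zero (i := (m : ℕ)) (Finset.mem_range.mpr m.isLt)
          ring
        rw [← this, Finset.prod_range_succ]
        ring
  · intro a b hab
    have h0 := congrFun hab ⟨0, hn⟩
    simp only [hsol, zero_add, Finset.prod_range_one, Nat.cast_zero, add_zero, neg_inj,
      Nat.cast_inj] at h0
    exact Fin.ext h0
end
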